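/- arXiv:0912.4613 — 3 statements merged into one kernel-verified Lean document; each statement's English description precedes it below -/
import Mathlib

section
/- If C is a complete order on a finite set of n ≥ 2 vertices, then there exist n-1 pairwise arc-disjoint directed paths from the transmitter to the receiver; that is, there is a family of n-1 directed paths, each starting at the least vertex and ending at the greatest vertex, such that no two distinct paths in the family use a common arc. -/
/-- The arcs of a directed path given as a list of vertices: the consecutive pairs. -/
def pathArcs {V : Type*} (l : List V) : List (V × V) := l.zip l.tail

/-- A directed path in the complete order from `t` to `r`: a nonempty list of vertices,
consecutive ones joined by an arc (`<`), starting at `t` and ending at `r`. -/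
def IsTRPath {V : Type*} [LT V] (t r : V) (l : List V) : Prop :=
  l ≠ [] ∧ l.Chain' (· < ·) ∧ l.head? = some t ∧ l.getLast? = some r

/-- A family of paths is pairwise arc-disjoint: no two distinct members share an arc. -/
def ArcDisjoint {V : Type*} {k : ℕ} (P : Fin k → List V) : Prop :=
  ∀ i j, i ≠ j → ∀ e ∈ pathArcs (P i), e ∉ pathArcs (P j)

/-!
Besides the direct arc `t → r`, every interior vertex `v` gives the two-arc path `t → v → r`.
Distinct such paths share no arc, since each of their arcs has the interior vertex defining the
path as one endpoint (or is `t → r` itself), and there are `n - 2` interior vertices.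
-/

open Function

def detour {V : Type*} (t r : V) : Option V → List V
  | none => [t, r]
  | some v => [t, v, r]

section Detour

variable {V : Type*} {t r : V}

@[simp]
lemma pathArcs_detour_none : pathArcs (detour t r none) = [(t, r)] := rfl

@[simp]
lemma pathArcs_detour_some (v : V) : pathArcs (detour t r (some v)) = [(t, v), (v, r)] := rfl

lemma isTRPath_detour [Preorder V] (htr : t < r) {o : Option V}
    (ho : ∀ v ∈ o, t < v ∧ v < r) : IsTRPath t r (detour t r o) := by
  cases o with
  | none => exact ⟨List.cons_ne_nil _ _, List.isChain_pair.2 htr, rfl, rfl⟩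
  | some v =>
    obtain ⟨htv, hvr⟩ := ho v rfl
    exact ⟨List.cons_ne_nil _ _, .cons_cons htv (.cons_cons hvr (.singleton _)), rfl, rfl⟩

lemma eq_of_mem_pathArcs_detour {o o' : Option V} (ho : ∀ v ∈ o, v ≠ t ∧ v ≠ r)
    (ho' : ∀ v ∈ o', v ≠ t ∧ v ≠ r) {e : V × V} (he : e ∈ pathArcs (detour t r o))
    (he' : e ∈ pathArcs (detour t r o')) : o = o' := by
  cases o <;> cases o' <;> simp only [pathArcs_detour_none, pathArcs_detour_some,
    List.mem_cons, List.not_mem_nil, or_false] at he he' <;>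
    rcases he with rfl | rfl <;> simp_all [Prod.ext_iff, eq_comm]

lemma arcDisjoint_detour_comp {k : ℕ} {f : Fin k → Option V} (hf : Injective f)
    (hmid : ∀ i, ∀ v ∈ f i, v ≠ t ∧ v ≠ r) : ArcDisjoint (detour t r ∘ f) :=
  fun i j hij _ hei hej => hij (hf (eq_of_mem_pathArcs_detour (hmid i) (hmid j) hei hej))

theorem exists_arcDisjoint_isTRPath [Preorder V] (htr : t < r) (S : Finset V)
    (hS : ∀ v ∈ S, t < v ∧ v < r) :
    ∃ P : Fin (S.card + 1) → List V, (∀ i, IsTRPath t r (P i)) ∧ ArcDisjoint P := by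
  let f : Fin (S.card + 1) → Option V :=
    fun i => (finSuccEquiv S.card i).map fun j => (S.equivFin.symm j : V)
  have hf : Injective f :=
    (Option.map_injective (Subtype.val_injective.comp S.equivFin.symm.injective)).comp
      (finSuccEquiv S.card).injective
  have hfS : ∀ i, ∀ v ∈ f i, t < v ∧ v < r := by
    intro i v hv
    obtain ⟨j, -, rfl⟩ := Option.mem_map.1 hv
    exact hS _ (S.equivFin.symm j).2
  refine ⟨detour t r ∘ f, fun i => isTRPath_detour htr (hfS i), arcDisjoint_detour_comp hf ?_⟩
  exact fun i v hv => ⟨(hfS i v hv).1.ne', (hfS i v hv).2.ne⟩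

end Detour

/-- In a complete order on `n ≥ 2` vertices there exist `n - 1` pairwise
arc-disjoint directed paths from the transmitter (the least vertex `t`) to the receiver
(the greatest vertex `r`). -/
theorem complete_order_exists_arc_disjoint_paths {V : Type*} [Fintype V] [LinearOrder V]
    (n : ℕ) (hn : 2 ≤ n) (hcard : Fintype.card V = n)
    (t r : V) (ht : ∀ x : V, t ≤ x) (hr : ∀ x : V, x ≤ r) :
    ∃ P : Fin (n - 1) → List V, (∀ i, IsTRPath t r (P i)) ∧ ArcDisjoint P := by
  classical
  have htr : t < r := by
    by_contra! hrt
    have : Fintype.card V ≤ 1 := Fintype.card_le_one_iff.2 fun a b =>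
      le_antisymm ((hr a).trans (hrt.trans (ht b))) ((hr b).trans (hrt.trans (ht a)))
    omega
  let S : Finset V := ({t, r} : Finset V)ᶜ
  have hS : ∀ v ∈ S, t < v ∧ v < r := by
    intro v hv
    simp only [S, Finset.mem_compl, Finset.mem_insert, Finset.mem_singleton, not_or] at hv
    exact ⟨(ht v).lt_of_ne' hv.1, (hr v).lt_of_ne hv.2⟩
  have hScard : n - 1 = S.card + 1 := by
    rw [Finset.card_compl, Finset.card_pair htr.ne, hcard]
    omega
  rw [hScard]
  exact exists_arcDisjoint_isTRPath htr S hS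
end

section
/- In a complete order on a finite set of n ≥ 2 vertices, any family of pairwise arc-disjoint directed paths from the transmitter to the receiver has at most n-1 members; hence n-1 is the maximum possible number of arc-disjoint paths from transmitter to receiver. -/
section

variable {V : Type*}

lemma IsTRPath.exists_first_arc [Preorder V] {t r : V} {l : List V} (h : IsTRPath t r l)
    (htr : t ≠ r) : ∃ x, t < x ∧ (t, x) ∈ pathArcs l := by
  obtain ⟨hne, hchain, hhead, hlast⟩ := h
  match l, hne with
  | [a], _ =>
    simp only [List.head?_cons, List.getLast?_singleton, Option.some.injEq] at hhead hlast
    exact absurd (hhead.symm.trans hlast) htr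
  | a :: b :: l', _ =>
    simp only [List.head?_cons, Option.some.injEq] at hhead
    subst hhead
    exact ⟨b, (List.isChain_cons_cons.mp hchain).1, by simp [pathArcs]⟩

lemma ArcDisjoint.card_le [Fintype V] [Preorder V] {t r : V} (htr : t ≠ r) {k : ℕ}
    {P : Fin k → List V} (hP : ∀ i, IsTRPath t r (P i)) (hD : ArcDisjoint P) :
    k ≤ Fintype.card V - 1 := by
  classical
  choose f hf hmem using fun i => (hP i).exists_first_arc htr
  have hinj : Function.Injective fun i => (⟨f i, (hf i).ne'⟩ : {x : V // x ≠ t}) := by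
    intro i j hij
    by_contra hne
    have hfij : f i = f j := congrArg Subtype.val hij
    exact hD i j hne _ (hmem i) (hfij ▸ hmem j)
  simpa [Fintype.card_subtype_compl] using Fintype.card_le_of_injective _ hinj

lemma ArcDisjoint.comp_injective {ι : Type*} {P : ι → List V}
    (hP : Pairwise fun i j => ∀ e ∈ pathArcs (P i), e ∉ pathArcs (P j))
    {k : ℕ} {f : Fin k → ι} (hf : Function.Injective f) : ArcDisjoint (P ∘ f) :=
  fun _ _ hij => hP (hf.ne hij)

def pathVia [DecidableEq V] (t r x : V) : List V := if x = t then [t, r] else [t, x, r]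

section pathVia

variable [LinearOrder V] {t r : V}

lemma isTRPath_pathVia (ht : ∀ x : V, t ≤ x) (hr : ∀ x : V, x ≤ r) (htr : t ≠ r) {x : V}
    (hx : x ≠ r) : IsTRPath t r (pathVia t r x) := by
  unfold pathVia
  split_ifs with hxt
  · exact ⟨List.cons_ne_nil _ _, List.isChain_pair.2 ((ht r).lt_of_ne htr), rfl, rfl⟩
  · exact ⟨List.cons_ne_nil _ _, List.isChain_cons_cons.2 ⟨(ht x).lt_of_ne (Ne.symm hxt),
      List.isChain_pair.2 ((hr x).lt_of_ne hx)⟩, rfl, rfl⟩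

lemma pathVia_arcs_disjoint {x y : V} (hx : x ≠ r) (hy : y ≠ r) (hxy : x ≠ y) :
    ∀ e ∈ pathArcs (pathVia t r x), e ∉ pathArcs (pathVia t r y) := by
  unfold pathVia
  split_ifs <;> simp [pathArcs] <;> grind

lemma exists_arcDisjoint_pathVia_family [Fintype V] (ht : ∀ x : V, t ≤ x)
    (hr : ∀ x : V, x ≤ r) (htr : t ≠ r) :
    ∃ P : Fin (Fintype.card V - 1) → List V, (∀ i, IsTRPath t r (P i)) ∧ ArcDisjoint P := by
  classical
  have hcard : Fintype.card {x : V // x ≠ r} = Fintype.card V - 1 := by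
    simp [Fintype.card_subtype_compl]
  let e := (Fintype.equivFinOfCardEq hcard).symm
  refine ⟨fun i => pathVia t r (e i : V), fun i => isTRPath_pathVia ht hr htr (e i).2,
    ArcDisjoint.comp_injective (P := fun x : {x : V // x ≠ r} => pathVia t r (x : V))
      (fun x y hxy => pathVia_arcs_disjoint x.2 y.2 (Subtype.coe_ne_coe.2 hxy)) e.injective⟩

end pathVia

lemma ne_of_forall_le_of_forall_ge [PartialOrder V] [Nontrivial V] {t r : V}
    (ht : ∀ x : V, t ≤ x) (hr : ∀ x : V, x ≤ r) : t ≠ r := by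
  obtain ⟨x, y, hxy⟩ := exists_pair_ne V
  rintro rfl
  exact hxy ((hr x).antisymm (ht x) |>.trans ((hr y).antisymm (ht y)).symm)

end

/-- In a complete order on `n ≥ 2` vertices, any family of pairwise
arc-disjoint directed paths from the transmitter `t` to the receiver `r` has at most
`n - 1` members; hence `n - 1` is the maximum possible number of arc-disjoint paths
from transmitter to receiver. -/
theorem complete_order_arc_disjoint_paths_bound {V : Type*} [Fintype V] [LinearOrder V]
    (n : ℕ) (hn : 2 ≤ n) (hcard : Fintype.card V = n)
    (t r : V) (ht : ∀ x : V, t ≤ x) (hr : ∀ x : V, x ≤ r) :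
    (∀ (k : ℕ) (P : Fin k → List V),
        (∀ i, IsTRPath t r (P i)) → ArcDisjoint P → k ≤ n - 1) ∧
    IsGreatest {k : ℕ | ∃ P : Fin k → List V, (∀ i, IsTRPath t r (P i)) ∧ ArcDisjoint P}
      (n - 1) := by
  subst hcard
  have : Nontrivial V := Fintype.one_lt_card_iff_nontrivial.1 (by omega)
  have htr := ne_of_forall_le_of_forall_ge ht hr
  have bound : ∀ (k : ℕ) (P : Fin k → List V),
      (∀ i, IsTRPath t r (P i)) → ArcDisjoint P → k ≤ Fintype.card V - 1 :=
    fun _ _ hP hD => hD.card_le htr hP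
  exact ⟨bound, exists_arcDisjoint_pathVia_family ht hr htr, fun k ⟨P, hP, hD⟩ => bound k P hP hD⟩
end

section
/- If C is a complete order on a finite set of n ≥ 2 vertices, then any family of n-1 pairwise arc-disjoint directed paths from the transmitter to the receiver uses exactly 2n-3 arcs in total; that is, the union of the arc sets of the n-1 paths has cardinality 2n-3. -/
open Finset Function

section PathArcs

variable {V : Type*}

@[simp]
lemma pathArcs_cons_cons (x y : V) (l : List V) :
    pathArcs (x :: y :: l) = (x, y) :: pathArcs (y :: l) := rfl

lemma snd_mem_of_mem_pathArcs {l : List V} {a b : V} (h : (a, b) ∈ pathArcs l) : b ∈ l :=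
  List.mem_of_mem_tail (List.of_mem_zip h).2

lemma List.IsChain.rel_of_mem_pathArcs {R : V → V → Prop} :
    ∀ {l : List V}, l.IsChain R → ∀ {a b : V}, (a, b) ∈ pathArcs l → R a b
  | [], _, _, _, h | [_], _, _, _, h => by simp [pathArcs] at h
  | x :: y :: l, hc, a, b, h => by
    obtain ⟨hxy, hc⟩ := List.isChain_cons_cons.mp hc
    rw [pathArcs_cons_cons, List.mem_cons, Prod.mk.injEq] at h
    obtain ⟨rfl, rfl⟩ | h := h
    · exact hxy
    · exact hc.rel_of_mem_pathArcs h

lemma List.Nodup.fst_eq_of_mem_pathArcs :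
    ∀ {l : List V}, l.Nodup → ∀ {a a' b : V},
      (a, b) ∈ pathArcs l → (a', b) ∈ pathArcs l → a = a'
  | [], _, _, _, _, h, _ | [_], _, _, _, _, h, _ => by simp [pathArcs] at h
  | x :: y :: l, hnd, a, a', b, h, h' => by
    have hy : ∀ {u}, (u, y) ∉ pathArcs (y :: l) := fun hu =>
      (List.nodup_cons.mp (List.nodup_cons.mp hnd).2).1 (List.of_mem_zip hu).2
    rw [pathArcs_cons_cons, List.mem_cons, Prod.mk.injEq] at h h'
    obtain ⟨rfl, rfl⟩ | h := h
    · obtain ⟨rfl, -⟩ | h' := h'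
      · rfl
      · exact absurd h' hy
    · obtain ⟨rfl, rfl⟩ | h' := h'
      · exact absurd h hy
      · exact (List.nodup_cons.mp hnd).2.fst_eq_of_mem_pathArcs h h'

lemma exists_mem_pathArcs_of_ne_getLast {r b : V} :
    ∀ {l : List V}, l.getLast? = some r → b ∈ l → b ≠ r → ∃ c, (b, c) ∈ pathArcs l
  | [], _, hb, _ => by simp at hb
  | [_], hl, hb, hbr => by simp_all
  | x :: y :: l, hl, hb, hbr => by
    obtain rfl | hb := List.mem_cons.mp hb
    · exact ⟨y, by simp⟩
    · obtain ⟨c, hc⟩ := exists_mem_pathArcs_of_ne_getLast (l := y :: l)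
        (by rwa [List.getLast?_cons_cons] at hl) hb hbr
      exact ⟨c, by simp [hc]⟩

lemma exists_mem_pathArcs_of_ne_head {t b : V} :
    ∀ {l : List V}, l.head? = some t → b ∈ l → b ≠ t → ∃ a, (a, b) ∈ pathArcs l
  | [], _, hb, _ => by simp at hb
  | [_], hh, hb, hbt => by simp_all
  | x :: y :: l, hh, hb, hbt => by
    obtain rfl | hb := List.mem_cons.mp hb
    · simp_all
    by_cases hby : b = y
    · exact ⟨x, by simp [hby]⟩
    · obtain ⟨a, ha⟩ := exists_mem_pathArcs_of_ne_head (l := y :: l) rfl hb hby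
      exact ⟨a, by simp [ha]⟩

end PathArcs

lemma Function.Injective.exists_eq_of_ne_of_card_eq_succ {ι α : Type*} [Fintype ι] [Fintype α]
    {f : ι → α} (hf : Injective f) {a : α} (hfa : ∀ i, f i ≠ a)
    (hcard : Fintype.card α = Fintype.card ι + 1) {b : α} (hb : b ≠ a) : ∃ i, f i = b := by
  classical
  let g : ι → {x // x ≠ a} := fun i => ⟨f i, hfa i⟩
  have hg : Bijective g := (Fintype.bijective_iff_injective_and_card g).mpr
    ⟨fun i j h => hf (congrArg Subtype.val h), by simp [hcard]⟩
  obtain ⟨i, hi⟩ := hg.2 ⟨b, hb⟩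
  exact ⟨i, congrArg Subtype.val hi⟩

section Paths

variable {V : Type*} [Preorder V] {t r : V} {l : List V}

lemma IsTRPath.lt_of_mem_pathArcs (hl : IsTRPath t r l) {a b : V} (h : (a, b) ∈ pathArcs l) :
    a < b :=
  List.IsChain.rel_of_mem_pathArcs hl.2.1 h

lemma IsTRPath.nodup (hl : IsTRPath t r l) : l.Nodup :=
  (List.IsChain.pairwise hl.2.1).nodup

lemma IsTRPath.exists_arc_from_transmitter (hl : IsTRPath t r l) (htr : t ≠ r) :
    ∃ b, (t, b) ∈ pathArcs l :=
  exists_mem_pathArcs_of_ne_getLast hl.2.2.2 (List.mem_of_mem_head? hl.2.2.1) htr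

lemma IsTRPath.exists_arc_to_receiver (hl : IsTRPath t r l) (htr : t ≠ r) :
    ∃ a, (a, r) ∈ pathArcs l :=
  exists_mem_pathArcs_of_ne_head hl.2.2.1 (List.mem_of_getLast? hl.2.2.2) htr.symm

end Paths

namespace ArcDisjoint

lemma injective {V : Type*} {k : ℕ} {P : Fin k → List V} (hdisj : ArcDisjoint P)
    {φ : Fin k → V × V} (hφ : ∀ i, φ i ∈ pathArcs (P i)) : Injective φ := by
  intro i j hij
  by_contra hne
  exact hdisj i j hne _ (hφ i) (hij ▸ hφ j)

variable {V : Type*} [LinearOrder V] {t r : V} {k : ℕ} {P : Fin k → List V}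

lemma exists_arc_from_transmitter [Fintype V] (hdisj : ArcDisjoint P)
    (hP : ∀ i, IsTRPath t r (P i)) (htr : t ≠ r) (hcard : Fintype.card V = k + 1)
    {b : V} (hb : b ≠ t) : ∃ i, (t, b) ∈ pathArcs (P i) := by
  choose f hf using fun i => (hP i).exists_arc_from_transmitter htr
  have hinj : Injective f := fun i j h => hdisj.injective hf (congrArg (Prod.mk t) h)
  obtain ⟨i, rfl⟩ := hinj.exists_eq_of_ne_of_card_eq_succ
    (fun i => ((hP i).lt_of_mem_pathArcs (hf i)).ne') (by simpa using hcard) hb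
  exact ⟨i, hf i⟩

lemma exists_arc_to_receiver [Fintype V] (hdisj : ArcDisjoint P)
    (hP : ∀ i, IsTRPath t r (P i)) (htr : t ≠ r) (hcard : Fintype.card V = k + 1)
    {a : V} (ha : a ≠ r) : ∃ i, (a, r) ∈ pathArcs (P i) := by
  choose g hg using fun i => (hP i).exists_arc_to_receiver htr
  have hinj : Injective g := fun i j h => hdisj.injective hg (congrArg (·, r) h)
  obtain ⟨i, rfl⟩ := hinj.exists_eq_of_ne_of_card_eq_succ
    (fun i => ((hP i).lt_of_mem_pathArcs (hg i)).ne) (by simpa using hcard) ha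
  exact ⟨i, hg i⟩

lemma eq_transmitter_or_eq_receiver [Finite V] (hdisj : ArcDisjoint P)
    (hP : ∀ i, IsTRPath t r (P i)) (ht : ∀ x, t ≤ x)
    (hfrom : ∀ b ≠ t, ∃ i, (t, b) ∈ pathArcs (P i)) {i : Fin k} {a b : V}
    (hab : (a, b) ∈ pathArcs (P i)) : a = t ∨ b = r := by
  induction b using WellFoundedGT.induction generalizing i a with
  | _ b ih =>
  by_contra! ⟨hat, hbr⟩
  have hbt : b ≠ t := ((ht a).trans_lt ((hP i).lt_of_mem_pathArcs hab)).ne'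
  have hexit : ∀ j, b ∈ P j → (b, r) ∈ pathArcs (P j) := by
    intro j hb
    obtain ⟨c, hc⟩ := exists_mem_pathArcs_of_ne_getLast (hP j).2.2.2 hb hbr
    obtain h | rfl := ih c ((hP j).lt_of_mem_pathArcs hc) hc
    · exact absurd h hbt
    · exact hc
  obtain ⟨j, hj⟩ := hfrom b hbt
  have hij : i ≠ j := by
    rintro rfl
    exact hat ((hP i).nodup.fst_eq_of_mem_pathArcs hab hj)
  exact hdisj i j hij _ (hexit i (snd_mem_of_mem_pathArcs hab))
    (hexit j (snd_mem_of_mem_pathArcs hj))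

end ArcDisjoint

section Count

variable {V : Type*} [Fintype V] [DecidableEq V]

def arcsFromOrTo (t r : V) : Finset (V × V) :=
  (univ.erase t).image (Prod.mk t) ∪ (univ.erase r).image (·, r)

lemma card_arcsFromOrTo {t r : V} (htr : t ≠ r) :
    #(arcsFromOrTo t r) = 2 * Fintype.card V - 3 := by
  have hfrom : #((univ.erase t).image (Prod.mk t)) = Fintype.card V - 1 := by
    rw [card_image_of_injective _ (Prod.mk_right_injective t), card_erase_of_mem (mem_univ t),
      card_univ]
  have hto : #((univ.erase r).image (·, r)) = Fintype.card V - 1 := by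
    rw [card_image_of_injective _ (Prod.mk_left_injective r), card_erase_of_mem (mem_univ r),
      card_univ]
  have hinter : (univ.erase t).image (Prod.mk t) ∩ (univ.erase r).image (·, r) = {(t, r)} := by
    ext ⟨a, b⟩
    simp only [mem_inter, mem_image, mem_erase, mem_univ, and_true, mem_singleton,
      Prod.mk.injEq]
    constructor
    · rintro ⟨⟨_, -, hta, -⟩, ⟨_, -, -, hrb⟩⟩
      exact ⟨hta.symm, hrb.symm⟩
    · rintro ⟨rfl, rfl⟩
      exact ⟨⟨_, htr.symm, rfl, rfl⟩, ⟨_, htr, rfl, rfl⟩⟩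
  have hpos : 2 ≤ Fintype.card V := Fintype.one_lt_card_iff.mpr ⟨t, r, htr⟩
  have hunion := card_union_add_card_inter
    ((univ.erase t).image (Prod.mk t)) ((univ.erase r).image (·, r))
  rw [hinter, hfrom, hto, card_singleton] at hunion
  unfold arcsFromOrTo
  omega

end Count

lemma ArcDisjoint.biUnion_pathArcs_eq_arcsFromOrTo {V : Type*} [LinearOrder V] [Fintype V]
    {t r : V} {k : ℕ} {P : Fin k → List V} (hdisj : ArcDisjoint P)
    (hP : ∀ i, IsTRPath t r (P i)) (ht : ∀ x, t ≤ x) (htr : t ≠ r)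
    (hcard : Fintype.card V = k + 1) :
    univ.biUnion (fun i => (pathArcs (P i)).toFinset) = arcsFromOrTo t r := by
  have hfrom := fun b (hb : b ≠ t) => hdisj.exists_arc_from_transmitter hP htr hcard hb
  ext ⟨a, b⟩
  simp only [arcsFromOrTo, mem_biUnion, mem_univ, true_and, List.mem_toFinset, mem_union,
    mem_image, mem_erase, Prod.mk.injEq, and_true]
  constructor
  · rintro ⟨i, hi⟩
    have hab := (hP i).lt_of_mem_pathArcs hi
    obtain rfl | rfl := hdisj.eq_transmitter_or_eq_receiver hP ht hfrom hi
    · exact Or.inl ⟨b, hab.ne', rfl, rfl⟩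
    · exact Or.inr ⟨a, hab.ne, rfl, rfl⟩
  · rintro (⟨b, hb, rfl, rfl⟩ | ⟨a, ha, rfl, rfl⟩)
    · exact hfrom b hb
    · exact hdisj.exists_arc_to_receiver hP htr hcard ha

/-- In a complete order on `n ≥ 2` vertices, any family of `n - 1`
pairwise arc-disjoint directed paths from the transmitter `t` to the receiver `r`
uses exactly `2n - 3` arcs in total: the union of the arc sets of the paths has
cardinality `2n - 3`. -/
theorem complete_order_arc_disjoint_paths_used_arcs {V : Type*} [Fintype V] [LinearOrder V]
    (n : ℕ) (hn : 2 ≤ n) (hcard : Fintype.card V = n)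
    (t r : V) (ht : ∀ x : V, t ≤ x) (hr : ∀ x : V, x ≤ r)
    (P : Fin (n - 1) → List V) (hP : ∀ i, IsTRPath t r (P i)) (hdisj : ArcDisjoint P) :
    (Finset.univ.biUnion (fun i => (pathArcs (P i)).toFinset)).card = 2 * n - 3 := by
  have htr : t ≠ r := by
    obtain ⟨x, hx⟩ := Fintype.exists_ne_of_one_lt_card (by omega : 1 < Fintype.card V) t
    exact fun h => hx (le_antisymm (h ▸ hr x) (ht x))
  rw [hdisj.biUnion_pathArcs_eq_arcsFromOrTo hP ht htr (by omega), card_arcsFromOrTo htr, hcard]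
end
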